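/- arXiv:0906.1767 — 4 statements merged into one kernel-verified Lean document; each statement's English description precedes it below -/
import Mathlib

section
/- Let V be a real vector space with a symmetric bilinear form of signature (1, n-1), and let P, s ∈ V satisfy P² = 1, s² = 1, and P·s > 1 (equivalently the 2×2 Gram determinant 1 - (P·s)² < 0, so span(P,s) has signature (1,1)). Then for any Q ∈ V linearly independent of P and s, if sgn(Q·P)·sgn(Q·s) < 0 then Q² < 0. -/
/-!
Write `a = Q·P`, `c = Q·s`, `m = P·s`. Since `m² ≠ 1`, `Q` splits as `R + u` with `u ∈ span(P, s)`
and `R ⊥ P, s`, and then `Q² = R² + (a² + c² - 2acm) / (1 - m²)`. As `P` is timelike, the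
Cauchy–Schwarz inequality on spatial coordinates forces `R² ≤ 0`. Opposite signs give `ac < 0`,
so the numerator is positive, while `m > 1` makes the denominator negative.
-/

open Finset

def IsLorentzBasis {n : ℕ} [NeZero n] {V : Type*} [AddCommGroup V] [Module ℝ V]
    (B : V →ₗ[ℝ] V →ₗ[ℝ] ℝ) (b : Module.Basis (Fin n) ℝ V) : Prop :=
  ∀ i j, B (b i) (b j) = if i = j then (if i = 0 then (1 : ℝ) else -1) else 0

namespace IsLorentzBasis

variable {n : ℕ} [NeZero n] {V : Type*} [AddCommGroup V] [Module ℝ V]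
  {B : V →ₗ[ℝ] V →ₗ[ℝ] ℝ} {b : Module.Basis (Fin n) ℝ V}

theorem apply_eq (hb : IsLorentzBasis B b) (x y : V) :
    B x y = b.repr x 0 * b.repr y 0 - ∑ i ∈ univ.erase 0, b.repr x i * b.repr y i := by
  unfold IsLorentzBasis at hb
  conv_lhs => rw [← b.sum_repr x, ← b.sum_repr y]
  simp only [map_sum, map_smul, LinearMap.sum_apply, LinearMap.smul_apply, smul_eq_mul, hb,
    mul_ite, mul_zero, sum_ite_eq', mem_univ, if_true]
  rw [← add_sum_erase _ _ (mem_univ 0), if_pos rfl, sub_eq_add_neg, ← sum_neg_distrib]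
  congr 1
  · ring
  · refine sum_congr rfl fun i hi => ?_
    rw [if_neg (ne_of_mem_erase hi)]
    ring

theorem symm (hb : IsLorentzBasis B b) (x y : V) : B x y = B y x := by
  simp only [hb.apply_eq, mul_comm]

theorem apply_self_nonpos_of_apply_eq_zero (hb : IsLorentzBasis B b) {p x : V}
    (hp : 0 < B p p) (hxp : B x p = 0) : B x x ≤ 0 := by
  rw [hb.apply_eq] at hp hxp ⊢
  set S := univ.erase (0 : Fin n)
  set x₀ := b.repr x 0
  set p₀ := b.repr p 0
  have hp_spatial : 0 ≤ ∑ i ∈ S, b.repr p i ^ 2 := sum_nonneg fun i _ => sq_nonneg _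
  simp only [← sq] at hp ⊢
  have : x₀ ^ 2 * p₀ ^ 2 ≤ (∑ i ∈ S, b.repr x i ^ 2) * p₀ ^ 2 := by
    calc x₀ ^ 2 * p₀ ^ 2 = (∑ i ∈ S, b.repr x i * b.repr p i) ^ 2 := by
          rw [← sub_eq_zero.mp hxp]; ring
      _ ≤ (∑ i ∈ S, b.repr x i ^ 2) * ∑ i ∈ S, b.repr p i ^ 2 :=
          sum_mul_sq_le_sq_mul_sq S _ _
      _ ≤ (∑ i ∈ S, b.repr x i ^ 2) * p₀ ^ 2 := by gcongr; linarith
  linarith [le_of_mul_le_mul_right this (by linarith)]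

end IsLorentzBasis

theorem exists_orthogonal_decomposition {V : Type*} [AddCommGroup V] [Module ℝ V]
    {B : V →ₗ[ℝ] V →ₗ[ℝ] ℝ} (hB : ∀ x y, B x y = B y x) {P s : V}
    (hP : B P P = 1) (hs : B s s = 1) (hPs : B P s ^ 2 ≠ 1) (Q : V) :
    ∃ R, B R P = 0 ∧ B R s = 0 ∧ B Q Q = B R R +
      (B Q P ^ 2 + B Q s ^ 2 - 2 * B Q P * B Q s * B P s) / (1 - B P s ^ 2) := by
  -- the coefficients of the projection onto `span(P, s)` solve the Gram system `[[1, m], [m, 1]]`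
  have hm : 1 - B P s ^ 2 ≠ 0 := sub_ne_zero.mpr (Ne.symm hPs)
  refine ⟨Q - ((B Q P - B Q s * B P s) / (1 - B P s ^ 2)) • P
    - ((B Q s - B Q P * B P s) / (1 - B P s ^ 2)) • s, ?_, ?_, ?_⟩ <;>
  · simp only [map_sub, map_smul, LinearMap.sub_apply, LinearMap.smul_apply, smul_eq_mul, hP, hs,
      hB s P, hB P Q, hB s Q]
    field_simp
    ring

theorem mul_neg_of_sign_mul_sign_neg {a c : ℝ} (h : Real.sign a * Real.sign c < 0) :
    a * c < 0 := by
  rcases lt_trichotomy a 0 with ha | ha | ha <;> rcases lt_trichotomy c 0 with hc | hc | hc <;>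
    simp only [Real.sign_of_neg, Real.sign_of_pos, Real.sign_zero, ha, hc] at h ⊢ <;>
    norm_num at h <;> nlinarith

theorem neg_norm_of_opposite_signs_general {n : ℕ} [NeZero n] {V : Type*}
    [AddCommGroup V] [Module ℝ V]
    (B : V →ₗ[ℝ] V →ₗ[ℝ] ℝ)
    (b : Module.Basis (Fin n) ℝ V)
    (hsig : ∀ i j, B (b i) (b j) =
      if i = j then (if i = 0 then (1 : ℝ) else -1) else 0)
    (P s : V) (hP : B P P = 1) (hs : B s s = 1) (hPs : 1 < B P s)
    (Q : V)
    (hsgn : Real.sign (B Q P) * Real.sign (B Q s) < 0) :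
    B Q Q < 0 := by
  have hb : IsLorentzBasis B b := hsig
  obtain ⟨R, hRP, -, hQ⟩ := exists_orthogonal_decomposition hb.symm hP hs (by nlinarith) Q
  have hR : B R R ≤ 0 := hb.apply_self_nonpos_of_apply_eq_zero (hP ▸ one_pos) hRP
  have hac := mul_neg_of_sign_mul_sign_neg hsgn
  have hplane : (B Q P ^ 2 + B Q s ^ 2 - 2 * B Q P * B Q s * B P s) / (1 - B P s ^ 2) < 0 :=
    div_neg_of_pos_of_neg (by nlinarith [sq_nonneg (B Q P), sq_nonneg (B Q s)]) (by nlinarith)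
  linarith

/-- In a real quadratic space of signature `(1, n-1)`, with `P² = s² = 1`, `P·s > 1`
(so that `span(P,s)` has signature `(1,1)`), any vector `Q` linearly independent of `P`
and `s` whose pairings with `P` and `s` have opposite signs satisfies `Q² < 0`. -/
theorem neg_norm_of_opposite_signs {n : ℕ} [NeZero n] {V : Type*}
    [AddCommGroup V] [Module ℝ V]
    (B : V →ₗ[ℝ] V →ₗ[ℝ] ℝ) (hsymm : ∀ x y, B x y = B y x)
    (b : Module.Basis (Fin n) ℝ V)
    (hsig : ∀ i j, B (b i) (b j) =
      if i = j then (if i = 0 then (1 : ℝ) else -1) else 0)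
    (P s : V) (hP : B P P = 1) (hs : B s s = 1) (hPs : 1 < B P s)
    (Q : V) (hind : LinearIndependent ℝ ![Q, P, s])
    (hsgn : Real.sign (B Q P) * Real.sign (B Q s) < 0) :
    B Q Q < 0 :=
  neg_norm_of_opposite_signs_general B b hsig P s hP hs hPs Q hsgn
end

section
/- Let V be a real quadratic space of signature (1, n-1), P, s ∈ V with P² = s² = 1 and (P·s)² > 1. Then for every Q ∈ V with sgn(Q·P) ≠ sgn(Q·s) (both nonzero, opposite signs), one has Q² + (2(P·s)/(1-(P·s)²))(Q·P)(Q·s) ≤ ((Q·P)² + (Q·s)²)/(1-(P·s)²) < 0. -/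
/-! Write `a = B P s`. Removing from `(1 - a²) Q` its projection onto `span {P, s}` leaves a vector
`R` orthogonal to `P` and `s` with `B R R = (1 - a²) G`, where `G` is the Gram determinant of
`(P, s, Q)`. The orthogonal complement of the timelike vector `P` is negative semidefinite (by
Cauchy–Schwarz on the spacelike coordinates), so `B R R ≤ 0`, and `1 - a² < 0` forces `G ≥ 0`.
Dividing `G ≥ 0` by `1 - a²` is the first inequality; the second is `(B Q P)² + (B Q s)² > 0`. -/

open Finset

namespace LinearMap

section Lorentzian

variable {n : ℕ} [NeZero n] {V : Type*} [AddCommGroup V] [Module ℝ V]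
  (B : V →ₗ[ℝ] V →ₗ[ℝ] ℝ) (b : Module.Basis (Fin n) ℝ V)

/-- `b` is orthonormal for `B` of signature `(1, n - 1)`. -/
def IsLorentzianBasis : Prop :=
  ∀ i j, B (b i) (b j) = if i = j then (if i = 0 then (1 : ℝ) else -1) else 0

variable {B b}

theorem IsLorentzianBasis.apply_eq (h : IsLorentzianBasis B b) (x y : V) :
    B x y = b.repr x 0 * b.repr y 0 - ∑ i ∈ univ.erase 0, b.repr x i * b.repr y i := by
  unfold IsLorentzianBasis at h
  have hsum : B x y = ∑ i, (if i = 0 then (1 : ℝ) else -1) * (b.repr x i * b.repr y i) := by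
    conv_lhs => rw [← b.sum_repr x, ← b.sum_repr y]
    simp only [map_sum, map_smul, sum_apply, smul_apply, h, smul_eq_mul,
      mul_ite, mul_zero, sum_ite_eq', mem_univ, if_true]
    exact sum_congr rfl fun i _ => by split <;> ring
  rw [hsum, ← add_sum_erase _ _ (mem_univ 0), if_pos rfl, one_mul, sub_eq_add_neg,
    ← sum_neg_distrib]
  congr 1
  exact sum_congr rfl fun i hi => by rw [if_neg (ne_of_mem_erase hi)]; ring

theorem IsLorentzianBasis.apply_comm (h : IsLorentzianBasis B b) (x y : V) : B x y = B y x := by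
  simp only [h.apply_eq, mul_comm]

theorem IsLorentzianBasis.apply_self_nonpos_of_apply_eq_zero (h : IsLorentzianBasis B b)
    {P R : V} (hP : 0 < B P P) (hRP : B R P = 0) : B R R ≤ 0 := by
  rw [h.apply_eq] at hP hRP ⊢
  set T := univ.erase (0 : Fin n)
  set p₀ := b.repr P 0
  set r₀ := b.repr R 0
  set π := ∑ i ∈ T, b.repr P i * b.repr P i
  set ρ := ∑ i ∈ T, b.repr R i * b.repr R i
  have hρ : 0 ≤ ρ := sum_nonneg fun i _ => mul_self_nonneg _
  have hCS := sum_mul_sq_le_sq_mul_sq T (fun i => b.repr R i) (fun i => b.repr P i)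
  have key : r₀ ^ 2 * p₀ ^ 2 ≤ ρ * p₀ ^ 2 := calc
    r₀ ^ 2 * p₀ ^ 2 = (∑ i ∈ T, b.repr R i * b.repr P i) ^ 2 := by rw [← sub_eq_zero.mp hRP]; ring
    _ ≤ ρ * π := by simpa only [sq] using hCS
    _ ≤ ρ * p₀ ^ 2 := by gcongr; nlinarith
  have hp₀ : 0 < p₀ ^ 2 := by nlinarith [sum_nonneg fun i (_ : i ∈ T) => mul_self_nonneg (b.repr P i)]
  nlinarith [le_of_mul_le_mul_right key hp₀]

end Lorentzian

section Projection

variable {R M : Type*} [CommRing R] [AddCommGroup M] [Module R M]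
  (B : M →ₗ[R] M →ₗ[R] R) (P s Q : M)

/-- For unit vectors `P`, `s` with `a = B P s`: `(1 - a²) Q` minus its projection onto
`span {P, s}`, scaled so as not to divide by the Gram determinant `1 - a²` of `(P, s)`. -/
def orthogonalPart : M :=
  (1 - B P s ^ 2) • Q - (B Q P - B P s * B Q s) • P - (B Q s - B P s * B Q P) • s

theorem apply_orthogonalPart_left (hsymm : ∀ x y, B x y = B y x) (hP : B P P = 1) :
    B (orthogonalPart B P s Q) P = 0 := by
  simp only [orthogonalPart, map_sub, map_smul, sub_apply, smul_apply, smul_eq_mul, hP,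
    hsymm s P]
  ring

theorem apply_orthogonalPart_right (hs : B s s = 1) : B (orthogonalPart B P s Q) s = 0 := by
  simp only [orthogonalPart, map_sub, map_smul, sub_apply, smul_apply, smul_eq_mul, hs]
  ring

/-- The second factor is the Gram determinant of `(P, s, Q)`. -/
theorem apply_orthogonalPart_self (hsymm : ∀ x y, B x y = B y x) (hP : B P P = 1)
    (hs : B s s = 1) :
    B (orthogonalPart B P s Q) (orthogonalPart B P s Q) = (1 - B P s ^ 2) *
      ((1 - B P s ^ 2) * B Q Q - B Q P ^ 2 - B Q s ^ 2 + 2 * B P s * B Q P * B Q s) := by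
  have hR : B (orthogonalPart B P s Q) Q = (1 - B P s ^ 2) * B Q Q - B Q P ^ 2 - B Q s ^ 2 +
      2 * B P s * B Q P * B Q s := by
    simp only [orthogonalPart, map_sub, map_smul, sub_apply, smul_apply, smul_eq_mul,
      hsymm P Q, hsymm s Q]
    ring
  conv_lhs => enter [2]; rw [orthogonalPart]
  simp only [map_sub, map_smul, smul_eq_mul, apply_orthogonalPart_left B P s Q hsymm hP,
    apply_orthogonalPart_right B P s Q hs, hR]
  ring

end Projection

end LinearMap

open LinearMap in
theorem norm_bound_of_opposite_signs_general {n : ℕ} [NeZero n] {V : Type*}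
    [AddCommGroup V] [Module ℝ V]
    (B : V →ₗ[ℝ] V →ₗ[ℝ] ℝ)
    (b : Module.Basis (Fin n) ℝ V)
    (hsig : ∀ i j, B (b i) (b j) =
      if i = j then (if i = 0 then (1 : ℝ) else -1) else 0)
    (P s : V) (hP : B P P = 1) (hs : B s s = 1) (hPs : 1 < (B P s) ^ 2) :
    ∀ Q : V, B Q P ≠ 0 → B Q s ≠ 0 → Real.sign (B Q P) ≠ Real.sign (B Q s) →
      (B Q Q + (2 * B P s / (1 - (B P s) ^ 2)) * (B Q P) * (B Q s) ≤
          ((B Q P) ^ 2 + (B Q s) ^ 2) / (1 - (B P s) ^ 2) ∧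
        ((B Q P) ^ 2 + (B Q s) ^ 2) / (1 - (B P s) ^ 2) < 0) := by
  intro Q hQP hQs _
  have hsymm := IsLorentzianBasis.apply_comm hsig
  have hd : 1 - B P s ^ 2 < 0 := sub_neg.mpr hPs
  have hgram : 0 ≤ (1 - B P s ^ 2) * B Q Q - B Q P ^ 2 - B Q s ^ 2 +
      2 * B P s * B Q P * B Q s := by
    have := IsLorentzianBasis.apply_self_nonpos_of_apply_eq_zero hsig (hP ▸ one_pos)
      (apply_orthogonalPart_left B P s Q hsymm hP)
    rw [apply_orthogonalPart_self B P s Q hsymm hP hs] at this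
    exact nonneg_of_mul_nonpos_right this hd
  refine ⟨?_, div_neg_of_pos_of_neg (by positivity) hd⟩
  have hcancel : 2 * B P s / (1 - B P s ^ 2) * B Q P * B Q s * (1 - B P s ^ 2) =
      2 * B P s * B Q P * B Q s := by
    field_simp [hd.ne]
  rw [le_div_iff_of_neg hd, add_mul, hcancel]
  linarith

/-- Signature `(1, n-1)` quadratic space, `P² = s² = 1`, `(P·s)² > 1`.  For every `Q`
whose pairings with `P` and `s` are nonzero and have opposite signs,
`Q² + (2(P·s)/(1-(P·s)²))(Q·P)(Q·s) ≤ ((Q·P)² + (Q·s)²)/(1-(P·s)²) < 0`. -/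
theorem norm_bound_of_opposite_signs {n : ℕ} [NeZero n] {V : Type*}
    [AddCommGroup V] [Module ℝ V]
    (B : V →ₗ[ℝ] V →ₗ[ℝ] ℝ) (hsymm : ∀ x y, B x y = B y x)
    (b : Module.Basis (Fin n) ℝ V)
    (hsig : ∀ i j, B (b i) (b j) =
      if i = j then (if i = 0 then (1 : ℝ) else -1) else 0)
    (P s : V) (hP : B P P = 1) (hs : B s s = 1) (hPs : 1 < (B P s) ^ 2) :
    ∀ Q : V, B Q P ≠ 0 → B Q s ≠ 0 → Real.sign (B Q P) ≠ Real.sign (B Q s) →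
      (B Q Q + (2 * B P s / (1 - (B P s) ^ 2)) * (B Q P) * (B Q s) ≤
          ((B Q P) ^ 2 + (B Q s) ^ 2) / (1 - (B P s) ^ 2) ∧
        ((B Q P) ^ 2 + (B Q s) ^ 2) / (1 - (B P s) ^ 2) < 0) :=
  norm_bound_of_opposite_signs_general B b hsig P s hP hs hPs
end

section
/- Let Λ₁, Λ₂ be lattices with quadratic forms induced by d_{abc}P₁^c and d_{abc}P₂^c, each of signature (1, b₂-1), and set P = P₁ + P₂ with J in the cone C_Λ (i.e. P_i·J² > 0 and P_i²·J > 0 for i=1,2). Define on Λ₁⊕Λ₂⊗ℝ the unit vectors 𝒫 = (-P₂, P₁)/√(P P₁ P₂) and s(J) = (-P₂·J² J, P₁·J² J)/√(P₁·J² P₂·J² P·J²) with respect to the quadratic form Q_J² = Q²_{1⊕2} - 2((Q₁+Q₂)·J)²/(P·J²). Then 𝒫·s(J) = √((P·J²·(P₁P₂J)²)/(P P₁ P₂ · P₁·J² · P₂·J²)) > 0, 𝒫² = 1, and s(J)² = 1. -/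
open scoped BigOperators

/-- Triple contraction `t3 d x y z = ∑ d_{abc} x^a y^b z^c`. -/
noncomputable def t3 {n : ℕ} (d : Fin n → Fin n → Fin n → ℝ) (x y z : Fin n → ℝ) : ℝ :=
  ∑ a, ∑ b, ∑ c, d a b c * x a * y b * z c

/-- The bilinear pairing on `Λ₁ ⊕ Λ₂ ⊗ ℝ` given by the quadratic form
`Q²_{1⊕2} = (Q₁)²_1 + (Q₂)²_2`. -/
noncomputable def pair12 {n : ℕ} (d : Fin n → Fin n → Fin n → ℝ) (P1 P2 : Fin n → ℝ)
    (x y : (Fin n → ℝ) × (Fin n → ℝ)) : ℝ :=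
  t3 d x.1 y.1 P1 + t3 d x.2 y.2 P2

/-- The unit vector `𝒫 = (-P₂, P₁)/√(PP₁P₂)`. -/
noncomputable def calP {n : ℕ} (d : Fin n → Fin n → Fin n → ℝ) (P1 P2 : Fin n → ℝ) :
    (Fin n → ℝ) × (Fin n → ℝ) :=
  (Real.sqrt (t3 d (P1 + P2) P1 P2))⁻¹ • ((-P2, P1) : (Fin n → ℝ) × (Fin n → ℝ))

/-- The unit vector `s(J) = (-P₂·J² J, P₁·J² J)/√(P₁·J² P₂·J² P·J²)`. -/
noncomputable def sVec {n : ℕ} (d : Fin n → Fin n → Fin n → ℝ) (P1 P2 J : Fin n → ℝ) :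
    (Fin n → ℝ) × (Fin n → ℝ) :=
  (Real.sqrt (t3 d P1 J J * t3 d P2 J J * t3 d (P1 + P2) J J))⁻¹ •
    ((-(t3 d P2 J J) • J, (t3 d P1 J J) • J) : (Fin n → ℝ) × (Fin n → ℝ))

lemma t3_smul1 {n : ℕ} (d : Fin n → Fin n → Fin n → ℝ) (r : ℝ) (x y z : Fin n → ℝ) :
    t3 d (r • x) y z = r * t3 d x y z := by
  simp only [t3, Pi.smul_apply, smul_eq_mul, Finset.mul_sum]
  refine Finset.sum_congr rfl fun a _ => Finset.sum_congr rfl fun b _ =>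
    Finset.sum_congr rfl fun c _ => by ring

lemma t3_smul2 {n : ℕ} (d : Fin n → Fin n → Fin n → ℝ) (r : ℝ) (x y z : Fin n → ℝ) :
    t3 d x (r • y) z = r * t3 d x y z := by
  simp only [t3, Pi.smul_apply, smul_eq_mul, Finset.mul_sum]
  refine Finset.sum_congr rfl fun a _ => Finset.sum_congr rfl fun b _ =>
    Finset.sum_congr rfl fun c _ => by ring

lemma t3_neg1 {n : ℕ} (d : Fin n → Fin n → Fin n → ℝ) (x y z : Fin n → ℝ) :
    t3 d (-x) y z = -t3 d x y z := by
  simp only [t3, Pi.neg_apply, ← Finset.sum_neg_distrib]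
  refine Finset.sum_congr rfl fun a _ => Finset.sum_congr rfl fun b _ =>
    Finset.sum_congr rfl fun c _ => by ring

lemma t3_neg2 {n : ℕ} (d : Fin n → Fin n → Fin n → ℝ) (x y z : Fin n → ℝ) :
    t3 d x (-y) z = -t3 d x y z := by
  simp only [t3, Pi.neg_apply, ← Finset.sum_neg_distrib]
  refine Finset.sum_congr rfl fun a _ => Finset.sum_congr rfl fun b _ =>
    Finset.sum_congr rfl fun c _ => by ring

lemma t3_add1 {n : ℕ} (d : Fin n → Fin n → Fin n → ℝ) (x y z w : Fin n → ℝ) :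
    t3 d (x + y) z w = t3 d x z w + t3 d y z w := by
  simp only [t3, Pi.add_apply, ← Finset.sum_add_distrib]
  refine Finset.sum_congr rfl fun a _ => Finset.sum_congr rfl fun b _ =>
    Finset.sum_congr rfl fun c _ => by ring

lemma t3_comm12 {n : ℕ} (d : Fin n → Fin n → Fin n → ℝ)
    (hd : ∀ a b c, d a b c = d b a c ∧ d a b c = d a c b) (x y z : Fin n → ℝ) :
    t3 d x y z = t3 d y x z := by
  unfold t3
  rw [Finset.sum_comm]
  refine Finset.sum_congr rfl fun a _ => Finset.sum_congr rfl fun b _ =>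
    Finset.sum_congr rfl fun c _ => by rw [(hd b a c).1]; ring

lemma t3_comm23 {n : ℕ} (d : Fin n → Fin n → Fin n → ℝ)
    (hd : ∀ a b c, d a b c = d b a c ∧ d a b c = d a c b) (x y z : Fin n → ℝ) :
    t3 d x y z = t3 d x z y := by
  unfold t3
  refine Finset.sum_congr rfl fun a _ => ?_
  rw [Finset.sum_comm]
  refine Finset.sum_congr rfl fun b _ => Finset.sum_congr rfl fun c _ => by
    rw [(hd a b c).2]; ring

theorem calP_sVec_unit {n : ℕ} (d : Fin n → Fin n → Fin n → ℝ)
    (hd : ∀ a b c, d a b c = d b a c ∧ d a b c = d a c b)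
    (P1 P2 J : Fin n → ℝ)
    (h1 : 0 < t3 d P1 J J) (h2 : 0 < t3 d P2 J J)
    (h1' : 0 < t3 d P1 P1 J) (h2' : 0 < t3 d P2 P2 J)
    (hPPP : 0 < t3 d (P1 + P2) P1 P2) (h12J : 0 < t3 d P1 P2 J) :
    pair12 d P1 P2 (calP d P1 P2) (sVec d P1 P2 J) =
      Real.sqrt (t3 d (P1 + P2) J J * (t3 d P1 P2 J) ^ 2 /
        (t3 d (P1 + P2) P1 P2 * t3 d P1 J J * t3 d P2 J J)) ∧
    0 < pair12 d P1 P2 (calP d P1 P2) (sVec d P1 P2 J) ∧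
    pair12 d P1 P2 (calP d P1 P2) (calP d P1 P2) = 1 ∧
    pair12 d P1 P2 (sVec d P1 P2 J) (sVec d P1 P2 J) = 1 := by
  set A := t3 d P1 J J with hA
  set B := t3 d P2 J J with hB
  set C := t3 d (P1 + P2) P1 P2 with hC
  set E := t3 d P1 P2 J with hE
  have hPJJ : t3 d (P1 + P2) J J = A + B := t3_add1 d P1 P2 J J
  have e1 : t3 d P2 J P1 = E := by
    rw [t3_comm23 d hd, t3_comm12 d hd]
  have e2 : t3 d P1 J P2 = E := by
    rw [t3_comm23 d hd]
  have e3 : t3 d J J P1 = A := by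
    rw [t3_comm23 d hd, t3_comm12 d hd]
  have e4 : t3 d J J P2 = B := by
    rw [t3_comm23 d hd, t3_comm12 d hd]
  have e5 : t3 d P2 P2 P1 + t3 d P1 P1 P2 = C := by
    rw [hC, t3_add1, t3_comm23 d hd P2 P2 P1, t3_comm12 d hd P2 P1 P2]
    ring
  set s1 := Real.sqrt C with hs1
  set s2 := Real.sqrt A with hs2
  set s3 := Real.sqrt B with hs3
  set s4 := Real.sqrt (A + B) with hs4
  have hs1p : 0 < s1 := Real.sqrt_pos.2 hPPP
  have hs2p : 0 < s2 := Real.sqrt_pos.2 h1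
  have hs3p : 0 < s3 := Real.sqrt_pos.2 h2
  have hs4p : 0 < s4 := Real.sqrt_pos.2 (by positivity)
  have hs1sq : s1 ^ 2 = C := Real.sq_sqrt hPPP.le
  have hs2sq : s2 ^ 2 = A := Real.sq_sqrt h1.le
  have hs3sq : s3 ^ 2 = B := Real.sq_sqrt h2.le
  have hs4sq : s4 ^ 2 = A + B := Real.sq_sqrt (by positivity)
  have hsplit : Real.sqrt (A * B * (A + B)) = s2 * s3 * s4 := by
    rw [hs2, hs3, hs4, ← Real.sqrt_mul h1.le, ← Real.sqrt_mul (by positivity)]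
  -- compute the three pairings
  have key1 : pair12 d P1 P2 (calP d P1 P2) (sVec d P1 P2 J) =
      s1⁻¹ * (s2 * s3 * s4)⁻¹ * ((A + B) * E) := by
    simp only [pair12, calP, sVec, ← hA, ← hB, ← hC, hPJJ, Prod.smul_mk, Prod.fst, Prod.snd,
      smul_neg, neg_smul, smul_smul, ← hs1, hsplit, t3_smul1, t3_smul2, t3_neg1, t3_neg2, e1, e2]
    ring
  have key2 : pair12 d P1 P2 (calP d P1 P2) (calP d P1 P2) = s1⁻¹ * s1⁻¹ * C := by
    simp only [pair12, calP, ← hC, Prod.smul_mk, Prod.fst, Prod.snd, ← hs1,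
      t3_smul1, t3_smul2, t3_neg1, t3_neg2]
    rw [← e5]
    ring
  have key3 : pair12 d P1 P2 (sVec d P1 P2 J) (sVec d P1 P2 J) =
      ((s2 * s3 * s4) ^ 2)⁻¹ * (B ^ 2 * A + A ^ 2 * B) := by
    simp only [pair12, sVec, ← hA, ← hB, hPJJ, Prod.smul_mk, Prod.fst, Prod.snd, smul_smul,
      smul_neg, neg_smul, hsplit, t3_smul1, t3_smul2, t3_neg1, t3_neg2, e3, e4]
    ring
  have hval : s1⁻¹ * (s2 * s3 * s4)⁻¹ * ((A + B) * E) = s4 * E / (s1 * s2 * s3) := by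
    rw [← hs4sq]
    field_simp [hs1p.ne', hs2p.ne', hs3p.ne', hs4p.ne']
  refine ⟨?_, ?_, ?_, ?_⟩
  · rw [key1, hval]
    have harg : (A + B) * E ^ 2 / (C * A * B) = (s4 * E / (s1 * s2 * s3)) ^ 2 := by
      rw [div_pow, mul_pow, mul_pow, mul_pow, hs1sq, hs2sq, hs3sq, hs4sq]
    rw [hPJJ, harg, Real.sqrt_sq (by positivity)]
  · rw [key1]
    positivity
  · rw [key2, ← hs1sq]
    field_simp
  · rw [key3]
    have : (s2 * s3 * s4) ^ 2 = A * B * (A + B) := by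
      rw [mul_pow, mul_pow, hs2sq, hs3sq, hs4sq]
    rw [this]
    field_simp
    ring
end

section
/- At the large-volume attractor point t(Γ) = lim_{λ→∞} D^{-1}Q + iλP, the stability function ℐ(Q₁,Q₂;t(Γ)) evaluates to √(P³/((P₁P²)(P₂P²)))·(P₁·Q₂ - P₂·Q₁); consequently sgn(ℐ(Q₁,Q₂;t(Γ))) - sgn(𝒫·Q) = 0 for all charge splittings, i.e. the Ansatz contribution of every 2-center bound state vanishes at the attractor point. -/
open scoped BigOperators

lemma sum3_comm {n : ℕ} (f : Fin n → Fin n → Fin n → ℝ) :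
    ∑ a, ∑ b, ∑ c, f a b c = ∑ c, ∑ a, ∑ b, f a b c := by
  calc ∑ a, ∑ b, ∑ c, f a b c
      = ∑ a, ∑ c, ∑ b, f a b c := Finset.sum_congr rfl (fun a _ => Finset.sum_comm)
    _ = ∑ c, ∑ a, ∑ b, f a b c := Finset.sum_comm

/-- At the large-volume attractor point `t(Γ) = D⁻¹Q + iλP`, the stability function
`ℐ(Q₁,Q₂;t(Γ))` equals `√(P³/((P₁P²)(P₂P²)))·(P₁·Q₂ - P₂·Q₁)`, and hence
`sgn ℐ - sgn(𝒫·Q) = 0`: no 2-center bound state contributes at the attractor point. -/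
theorem attractor_no_boundstates {n : ℕ} (d : Fin n → Fin n → Fin n → ℝ)
    (hd : ∀ a b c, d a b c = d b a c ∧ d a b c = d a c b)
    (P1 P2 P : Fin n → ℝ) (hP : P = P1 + P2)
    (hPPP : 0 < t3 d P P P) (h1 : 0 < t3 d P1 P P) (h2 : 0 < t3 d P2 P P)
    (h12 : 0 < t3 d P1 P2 P)
    (Q1 Q2 B : Fin n → ℝ)
    (hB : ∀ a, (∑ b, ∑ c, d a b c * B b * P c) = Q1 a + Q2 a) :
    (t3 d P1 P P * ((∑ a, Q2 a * P a) - t3 d B P P2) -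
        t3 d P2 P P * ((∑ a, Q1 a * P a) - t3 d B P P1)) /
        Real.sqrt (t3 d P1 P P * t3 d P2 P P * t3 d P P P) =
      Real.sqrt (t3 d P P P / (t3 d P1 P P * t3 d P2 P P)) *
        ((∑ a, P1 a * Q2 a) - ∑ a, P2 a * Q1 a) ∧
    Real.sign ((t3 d P1 P P * ((∑ a, Q2 a * P a) - t3 d B P P2) -
          t3 d P2 P P * ((∑ a, Q1 a * P a) - t3 d B P P1)) /
          Real.sqrt (t3 d P1 P P * t3 d P2 P P * t3 d P P P)) -
      Real.sign ((((∑ a, P1 a * Q2 a) - ∑ a, P2 a * Q1 a)) /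
          Real.sqrt (t3 d P1 P2 P)) = 0 := by
  set A1 := t3 d P1 P P with hA1
  set A2 := t3 d P2 P P with hA2
  set S := t3 d P P P with hS
  set X := ((∑ a, P1 a * Q2 a) - ∑ a, P2 a * Q1 a) with hX
  -- contraction of B with P and any R
  have key : ∀ R : Fin n → ℝ, t3 d B P R = ∑ a, (Q1 a + Q2 a) * R a := by
    intro R
    rw [show t3 d B P R = ∑ a, ∑ b, ∑ c, d a b c * B a * P b * R c from rfl, sum3_comm]
    refine Finset.sum_congr rfl (fun c _ => ?_)
    have step : ∑ a, ∑ b, d a b c * B a * P b * R c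
        = (∑ a, ∑ b, d c a b * B a * P b) * R c := by
      rw [Finset.sum_mul]
      refine Finset.sum_congr rfl (fun a _ => ?_)
      rw [Finset.sum_mul]
      refine Finset.sum_congr rfl (fun b _ => ?_)
      have hsym : d a b c = d c a b := by
        rw [(hd a b c).1, (hd b a c).2, (hd b c a).1, (hd c b a).2]
      rw [hsym]
    rw [step, hB c]
  -- the two bracketed factors
  have e2 : (∑ a, Q2 a * P a) - t3 d B P P2 = X := by
    rw [key P2, hX, hP]
    simp only [Pi.add_apply]
    rw [← Finset.sum_sub_distrib, ← Finset.sum_sub_distrib]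
    refine Finset.sum_congr rfl (fun a _ => ?_); ring
  have e1 : (∑ a, Q1 a * P a) - t3 d B P P1 = -X := by
    rw [key P1, hX, hP]
    simp only [Pi.add_apply]
    rw [neg_sub, ← Finset.sum_sub_distrib, ← Finset.sum_sub_distrib]
    refine Finset.sum_congr rfl (fun a _ => ?_); ring
  -- linearity: S = A1 + A2
  have hsum : S = A1 + A2 := by
    rw [hS, hA1, hA2]
    nth_rewrite 1 [hP]
    show t3 d (P1 + P2) P P = _
    unfold t3
    rw [← Finset.sum_add_distrib]
    refine Finset.sum_congr rfl (fun a _ => ?_)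
    rw [← Finset.sum_add_distrib]
    refine Finset.sum_congr rfl (fun b _ => ?_)
    rw [← Finset.sum_add_distrib]
    refine Finset.sum_congr rfl (fun c _ => ?_)
    simp [Pi.add_apply]; ring
  have hnum : A1 * ((∑ a, Q2 a * P a) - t3 d B P P2) -
      A2 * ((∑ a, Q1 a * P a) - t3 d B P P1) = S * X := by
    rw [e1, e2, hsum]; ring
  have hA12pos : (0:ℝ) < A1 * A2 := mul_pos h1 h2
  have hsqA : (0:ℝ) < Real.sqrt (A1 * A2) := Real.sqrt_pos.mpr hA12pos
  have hsqS : (0:ℝ) < Real.sqrt S := Real.sqrt_pos.mpr hPPP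
  have hsplit : Real.sqrt (A1 * A2 * S) = Real.sqrt (A1 * A2) * Real.sqrt S :=
    Real.sqrt_mul hA12pos.le S
  have hdivsqrt : Real.sqrt (S / (A1 * A2)) = Real.sqrt S / Real.sqrt (A1 * A2) :=
    Real.sqrt_div hPPP.le _
  have hcoef : S / Real.sqrt (A1 * A2 * S) = Real.sqrt (S / (A1 * A2)) := by
    rw [hsplit, hdivsqrt]
    rw [div_eq_div_iff (by positivity) hsqA.ne']
    rw [mul_comm (Real.sqrt (A1*A2)) (Real.sqrt S), ← mul_assoc, Real.mul_self_sqrt hPPP.le]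
  have main : A1 * ((∑ a, Q2 a * P a) - t3 d B P P2) -
        A2 * ((∑ a, Q1 a * P a) - t3 d B P P1) = S * X := hnum
  have firstpart : (A1 * ((∑ a, Q2 a * P a) - t3 d B P P2) -
        A2 * ((∑ a, Q1 a * P a) - t3 d B P P1)) / Real.sqrt (A1 * A2 * S)
      = Real.sqrt (S / (A1 * A2)) * X := by
    rw [main, ← hcoef]; ring
  refine ⟨firstpart, ?_⟩
  rw [firstpart]
  have hc1 : (0:ℝ) < Real.sqrt (S / (A1 * A2)) := Real.sqrt_pos.mpr (by positivity)
  have hc2 : (0:ℝ) < Real.sqrt (t3 d P1 P2 P) := Real.sqrt_pos.mpr h12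
  rcases lt_trichotomy X 0 with hx | hx | hx
  · rw [Real.sign_of_neg (by nlinarith), Real.sign_of_neg (div_neg_of_neg_of_pos hx hc2)]
    ring
  · rw [hx]; simp
  · rw [Real.sign_of_pos (by positivity), Real.sign_of_pos (div_pos hx hc2)]
    ring
end
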